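/- arXiv:2307.04017 — 2 statements merged into one kernel-verified Lean document; each statement's English description precedes it below -/
import Mathlib

section
/- Let γ > 0 be such that for all n > 2 and all N ≤ γ·b_n the Fibonacci cubature formula b_n^{−1} Σ_{ν=1}^{b_n} f(y^ν) equals (2π)^{−2} ∫_{𝕋²} f dx for every f ∈ 𝒯(Γ(N,2)); let n' be the largest natural number with 2^{n'} ≤ γ·b_n/9, and for s ∈ ℤ_+² define V_s(f) := b_n^{−1} Σ_{ν=1}^{b_n} f(y^ν) 𝒱_{2^s}(· − y^ν). Then for any continuous function f on 𝕋²: min_{s: s_1+s_2 = n'} ‖f − V_s(f)‖_∞ ≤ 10·min_{s: s_1+s_2 = n'} d(f, 𝒯(R(s)))_∞. -/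
noncomputable section
open scoped BigOperators
open MeasureTheory

/-- The cube `[0, 2π]^d`, representing the torus `𝕋^d`. -/
def cube (d : ℕ) : Set (Fin d → ℝ) := Set.Icc 0 (fun _ => 2 * Real.pi)

/-- Uniform norm over the torus `𝕋^d = [0, 2π]^d`. -/
def unifNorm {d : ℕ} (f : (Fin d → ℝ) → ℂ) : ℝ :=
  ⨆ x : cube d, ‖f ↑x‖

/-- The exponential `e^{i(k,x)}`. -/
def expFun {d : ℕ} (k : Fin d → ℤ) : (Fin d → ℝ) → ℂ :=
  fun x => Complex.exp (Complex.I * ∑ j, (k j : ℂ) * (x j : ℂ))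

/-- `𝒯(Q)`: the space of trigonometric polynomials with frequencies in `Q`. -/
def trigSpace {d : ℕ} (Q : Finset (Fin d → ℤ)) : Submodule ℂ ((Fin d → ℝ) → ℂ) :=
  Submodule.span ℂ (expFun '' (Q : Set (Fin d → ℤ)))

/-- `R(s) = {k : |k_j| < 2^{s_j}}`. -/
def Rbox {d : ℕ} (s : Fin d → ℕ) : Finset (Fin d → ℤ) :=
  Fintype.piFinset fun j => Finset.Ioo (-(2 ^ (s j) : ℤ)) ((2 : ℤ) ^ (s j))

/-- Best uniform approximation `d(f, 𝒯(Q))_∞`. -/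
def distT {d : ℕ} (f : (Fin d → ℝ) → ℂ) (Q : Finset (Fin d → ℤ)) : ℝ :=
  ⨅ u : trigSpace Q, unifNorm (f - (u : (Fin d → ℝ) → ℂ))

/-- `2π`-periodicity in each variable. -/
def Periodic2Pi {d : ℕ} (f : (Fin d → ℝ) → ℂ) : Prop :=
  ∀ (x : Fin d → ℝ) (j : Fin d), f (x + (2 * Real.pi) • (Pi.single j 1 : Fin d → ℝ)) = f x

/-- The Fibonacci numbers `b_0 = b_1 = 1`, `b_n = b_{n-1} + b_{n-2}`. -/
def fibb : ℕ → ℕ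
  | 0 => 1
  | 1 => 1
  | n + 2 => fibb (n + 1) + fibb n

/-- The hyperbolic cross `Γ(N, d)`. -/
def hyperCross (d N : ℕ) : Finset (Fin d → ℤ) :=
  (Fintype.piFinset fun _ : Fin d => Finset.Icc (-(N : ℤ)) (N : ℤ)).filter
    fun k => (∏ j, max |k j| 1) ≤ (N : ℤ)

/-- The Fibonacci points `y^ν = (2πν/b_n, 2π{ν b_{n-1}/b_n})`. -/
def fibPoint (n ν : ℕ) : Fin 2 → ℝ :=
  ![2 * Real.pi * ν / fibb n, 2 * Real.pi * Int.fract ((↑(ν * fibb (n - 1)) : ℝ) / fibb n)]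

/-- The Dirichlet kernel `𝒟_l`. -/
def dirichletK (l : ℕ) (x : ℝ) : ℂ :=
  ∑ k ∈ Finset.Icc (-(l : ℤ)) (l : ℤ), Complex.exp (Complex.I * (k : ℂ) * (x : ℂ))

/-- The de la Vallée Poussin kernel `𝒱_j`. -/
def vpK (j : ℕ) (x : ℝ) : ℂ := (j : ℂ)⁻¹ * ∑ l ∈ Finset.Ico j (2 * j), dirichletK l x

/-- The multivariate de la Vallée Poussin kernel `𝒱_{(j_1,…,j_d)}`. -/
def vpKd {d : ℕ} (j : Fin d → ℕ) (x : Fin d → ℝ) : ℂ := ∏ i, vpK (j i) (x i)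

/-- The sampling operator `V_s` associated with the Fibonacci points:
`V_s(f)(x) = b_n⁻¹ ∑_ν f(y^ν) 𝒱_{2^s}(x − y^ν)`. -/
def fibV (n : ℕ) (s : Fin 2 → ℕ) (f : (Fin 2 → ℝ) → ℂ) : (Fin 2 → ℝ) → ℂ :=
  fun x => (fibb n : ℂ)⁻¹ * ∑ ν ∈ Finset.Icc 1 (fibb n),
    f (fibPoint n ν) * vpKd (fun i => 2 ^ s i) (x - fibPoint n ν)

/-!
With `N = 9 · 2^{n'} ≤ γ b_n` the Fibonacci cubature is exact on `𝒯(Γ(N,2))`, and for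
`s₁ + s₂ = n'` every product `g₁(y₁) g₂(y₂)` of univariate polynomials of degrees `≤ 3 · 2^{sᵢ}`
lies in `𝒯(Γ(N,2))`. Two such products matter. First, `y ↦ e^{i(k,y)} 𝒱_{2^s}(x - y)` for
`k ∈ R(s)`, whose integral is `(2π)² e^{i(k,x)}`: so `V_s` reproduces `𝒯(R(s))`. Second, the
majorant `|𝒱_j| ≤ j⁻¹ (K_{2j-1} + K_{j-1})` by the nonnegative Fejér sums
`K_m = ∑_{l ≤ m} 𝒟_l = |∑_{p ≤ m} e^{ipu}|²`: its cubature sum equals its integral, which bounds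
the Lebesgue constant of `V_s` by `9`. Hence `‖f - V_s f‖ ≤ ‖f - t‖ + ‖V_s (t - f)‖ ≤ 10 ‖f - t‖`
for every `t ∈ 𝒯(R(s))`.

When `n ≤ 2` the choice of `n'` forces `γ ≥ 9/2`, and then exactness for `b_3 = 3`, `N = 3` fails
on `e^{3 i x₁}`, which equals `1` at every Fibonacci point.
-/

open Real

def exp1 (k : ℤ) (u : ℝ) : ℂ := Complex.exp (Complex.I * k * u)

lemma exp1_mul_exp1 (k m : ℤ) (u : ℝ) : exp1 k u * exp1 m u = exp1 (k + m) u := by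
  simp only [exp1, ← Complex.exp_add]; push_cast; ring_nf

lemma exp1_zero_left (u : ℝ) : exp1 0 u = 1 := by simp [exp1]

lemma exp1_sub (k : ℤ) (x u : ℝ) : exp1 k (x - u) = exp1 k x * exp1 (-k) u := by
  simp only [exp1, ← Complex.exp_add]; push_cast; ring_nf

lemma conj_exp1 (k : ℤ) (u : ℝ) : starRingEnd ℂ (exp1 k u) = exp1 (-k) u := by
  simp only [exp1, ← Complex.exp_conj, map_mul, Complex.conj_I, map_intCast, Complex.conj_ofReal]
  push_cast; ring_nf

@[fun_prop]
lemma continuous_exp1 (k : ℤ) : Continuous (exp1 k) := by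
  unfold exp1; fun_prop

lemma integral_exp1 (k : ℤ) :
    ∫ u in Set.Icc 0 (2 * π), exp1 k u = if k = 0 then ((2 * π : ℝ) : ℂ) else 0 := by
  rw [integral_Icc_eq_integral_Ioc, ← intervalIntegral.integral_of_le (by positivity)]
  split_ifs with hk
  · simp [hk, exp1_zero_left]
  · have hc : Complex.I * k ≠ 0 := by simpa [Complex.I_ne_zero] using hk
    simp only [exp1, integral_exp_mul_complex hc]
    rw [show Complex.I * k * ((2 * π : ℝ) : ℂ) = k * (2 * π * Complex.I) by push_cast; ring,
      Complex.exp_int_mul_two_pi_mul_I]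
    simp

lemma expFun_eq_prod {d : ℕ} (k : Fin d → ℤ) (y : Fin d → ℝ) :
    expFun k y = ∏ i, exp1 (k i) (y i) := by
  simp only [expFun, exp1, Finset.mul_sum, Complex.exp_sum, mul_assoc]

lemma integral_cube_prod {d : ℕ} (g : Fin d → ℝ → ℂ) :
    ∫ x in cube d, ∏ i, g i (x i) = ∏ i, ∫ u in Set.Icc 0 (2 * π), g i u := by
  rw [cube, ← Set.pi_univ_Icc, volume_pi, Measure.restrict_pi_pi]
  exact integral_fintype_prod_eq_prod _

def trigPoly1 (M : ℕ) : Submodule ℂ (ℝ → ℂ) :=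
  Submodule.span ℂ (exp1 '' {k | |k| ≤ M})

lemma exp1_mem_trigPoly1 {M : ℕ} {k : ℤ} (hk : |k| ≤ M) : exp1 k ∈ trigPoly1 M :=
  Submodule.subset_span ⟨k, hk, rfl⟩

lemma trigPoly1_mono {M M' : ℕ} (h : M ≤ M') : trigPoly1 M ≤ trigPoly1 M' :=
  Submodule.span_mono <| Set.image_mono fun _ (hk : _ ≤ _) => hk.trans (Int.ofNat_le.mpr h)

lemma continuous_of_mem_trigPoly1 {M : ℕ} {g : ℝ → ℂ} (hg : g ∈ trigPoly1 M) : Continuous g := by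
  induction hg using Submodule.span_induction with
  | mem _ hx => obtain ⟨k, -, rfl⟩ := hx; exact continuous_exp1 k
  | zero => exact continuous_const
  | add _ _ _ _ h₁ h₂ => exact h₁.add h₂
  | smul a _ _ h => exact h.const_smul a

lemma comp_sub_mem_trigPoly1 {M : ℕ} {g : ℝ → ℂ} (hg : g ∈ trigPoly1 M) (x : ℝ) :
    (fun u => g (x - u)) ∈ trigPoly1 M := by
  let L := LinearMap.funLeft ℂ ℂ fun u : ℝ => x - u
  refine (Submodule.span_le (p := (trigPoly1 M).comap L)).mpr ?_ hg
  rintro _ ⟨k, hk, rfl⟩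
  have : L (exp1 k) = exp1 k x • exp1 (-k) := funext fun u => exp1_sub k x u
  simp only [SetLike.mem_coe, Submodule.mem_comap, this]
  exact Submodule.smul_mem _ _ (exp1_mem_trigPoly1 (by rwa [abs_neg]))

lemma exp1_mul_mem_trigPoly1 {M K : ℕ} {g : ℝ → ℂ} (hg : g ∈ trigPoly1 M) {k : ℤ}
    (hk : |k| ≤ K) : exp1 k * g ∈ trigPoly1 (K + M) := by
  let L := LinearMap.mulLeft ℂ (exp1 k)
  refine (Submodule.span_le (p := (trigPoly1 (K + M)).comap L)).mpr ?_ hg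
  rintro _ ⟨m, hm, rfl⟩
  have : L (exp1 m) = exp1 (k + m) := funext fun u => exp1_mul_exp1 k m u
  simp only [SetLike.mem_coe, Submodule.mem_comap, this]
  refine exp1_mem_trigPoly1 ((abs_add_le k m).trans ?_)
  push_cast
  exact add_le_add hk hm

lemma dirichletK_eq_sum (l : ℕ) : dirichletK l = ∑ k ∈ Finset.Icc (-(l : ℤ)) l, exp1 k := by
  ext x; simp only [Finset.sum_apply]; rfl

@[fun_prop]
lemma continuous_dirichletK (l : ℕ) : Continuous (dirichletK l) := by
  unfold dirichletK; fun_prop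

lemma dirichletK_mem_trigPoly1 {l M : ℕ} (h : l ≤ M) : dirichletK l ∈ trigPoly1 M := by
  rw [dirichletK_eq_sum]
  refine Submodule.sum_mem _ fun k hk => exp1_mem_trigPoly1 ?_
  rw [Finset.mem_Icc] at hk
  exact abs_le.mpr ⟨by omega, by omega⟩

lemma prod_mem_trigSpace_hyperCross {M : Fin 2 → ℕ} {N : ℕ} {g : Fin 2 → ℝ → ℂ}
    (hg : ∀ i, g i ∈ trigPoly1 (M i)) (hN : max (M 0) 1 * max (M 1) 1 ≤ N) :
    (fun y : Fin 2 → ℝ => ∏ i, g i (y i)) ∈ trigSpace (hyperCross 2 N) := by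
  let B : (ℝ → ℂ) →ₗ[ℂ] (ℝ → ℂ) →ₗ[ℂ] ((Fin 2 → ℝ) → ℂ) :=
    LinearMap.mk₂ ℂ (fun g₀ g₁ y => g₀ (y 0) * g₁ (y 1))
      (fun _ _ _ => funext fun _ => add_mul _ _ _)
      (fun _ _ _ => funext fun _ => mul_assoc _ _ _)
      (fun _ _ _ => funext fun _ => mul_add _ _ _)
      (fun _ _ _ => funext fun _ => mul_left_comm _ _ _)
  have hB := Submodule.apply_mem_map₂ B (hg 0) (hg 1)
  rw [trigPoly1, trigPoly1, Submodule.map₂_span_span] at hB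
  simp_rw [Fin.prod_univ_two]
  refine Submodule.span_le.mpr ?_ hB
  rintro _ ⟨_, ⟨a, (ha : |a| ≤ M 0), rfl⟩, _, ⟨b, (hb : |b| ≤ M 1), rfl⟩, rfl⟩
  have hab : B (exp1 a) (exp1 b) = expFun ![a, b] := by
    ext y; simp [B, expFun_eq_prod, Fin.prod_univ_two]
  beta_reduce
  rw [SetLike.mem_coe, hab]
  refine Submodule.subset_span ⟨![a, b], ?_, rfl⟩
  have hM₀ : M 0 ≤ N := (le_max_left _ _).trans <|
    (Nat.le_mul_of_pos_right _ (by positivity)).trans hN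
  have hM₁ : M 1 ≤ N := (le_max_left _ _).trans <|
    (Nat.le_mul_of_pos_left _ (by positivity)).trans hN
  simp only [hyperCross, Finset.coe_filter, Fintype.mem_piFinset, Finset.mem_Icc, Set.mem_ofPred_eq,
    Fin.prod_univ_two, Fin.forall_fin_two, Matrix.cons_val_zero, Matrix.cons_val_one]
  refine ⟨⟨abs_le.mp (ha.trans (by exact_mod_cast hM₀)),
    abs_le.mp (hb.trans (by exact_mod_cast hM₁))⟩, ?_⟩
  calc max |a| 1 * max |b| 1 ≤ max (M 0 : ℤ) 1 * max (M 1 : ℤ) 1 := by gcongr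
    _ ≤ N := by exact_mod_cast hN

lemma integral_exp1_mul_dirichletK_sub {k : ℤ} {l : ℕ} (hk : |k| ≤ l) (x : ℝ) :
    ∫ u in Set.Icc 0 (2 * π), exp1 k u * dirichletK l (x - u) = 2 * π * exp1 k x := by
  have hexpand : ∀ u, exp1 k u * dirichletK l (x - u) =
      ∑ m ∈ Finset.Icc (-(l : ℤ)) l, exp1 m x * exp1 (k - m) u := by
    intro u
    simp only [dirichletK_eq_sum, Finset.sum_apply, Finset.mul_sum, exp1_sub]
    refine Finset.sum_congr rfl fun m _ => ?_
    rw [mul_left_comm, exp1_mul_exp1, sub_eq_add_neg]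
  simp_rw [hexpand]
  rw [integral_finsetSum _ fun m _ =>
    (by fun_prop : Continuous fun u => exp1 m x * exp1 (k - m) u).integrableOn_Icc]
  simp_rw [integral_const_mul, integral_exp1, sub_eq_zero, mul_ite, mul_zero]
  rw [Finset.sum_ite_eq, if_pos (Finset.mem_Icc.mpr (abs_le.mp hk))]
  push_cast; ring

lemma dirichletK_succ (l : ℕ) (u : ℝ) :
    dirichletK (l + 1) u = dirichletK l u + (exp1 (l + 1) u + exp1 (-(l + 1)) u) := by
  have hIcc : Finset.Icc (-((l + 1 : ℕ) : ℤ)) ((l + 1 : ℕ) : ℤ) =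
      insert (-(l + 1 : ℤ)) (insert ((l : ℤ) + 1) (Finset.Icc (-(l : ℤ)) l)) := by
    ext k; simp only [Finset.mem_insert, Finset.mem_Icc]; omega
  simp only [dirichletK_eq_sum, Finset.sum_apply]
  rw [hIcc, Finset.sum_insert (by simp only [Finset.mem_insert, Finset.mem_Icc]; omega),
    Finset.sum_insert (by simp)]
  ring

lemma dirichletK_eq_one_add_sum (l : ℕ) (u : ℝ) :
    dirichletK l u = 1 + ∑ j ∈ Finset.range l, (exp1 (j + 1) u + exp1 (-(j + 1)) u) := by
  induction l with
  | zero => simp [dirichletK, exp1]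
  | succ l ih =>
    rw [dirichletK_succ, ih, Finset.sum_range_succ]
    ring

/-- Unnormalised: `m + 1` times the Fejér kernel. -/
def fejerK (m : ℕ) : ℝ → ℂ := ∑ l ∈ Finset.range (m + 1), dirichletK l

lemma fejerK_eq_normSq (m : ℕ) (u : ℝ) :
    fejerK m u = Complex.normSq (∑ p ∈ Finset.range (m + 1), exp1 p u) := by
  rw [← Complex.mul_conj]
  induction m with
  | zero => simp [fejerK, dirichletK, exp1]
  | succ m ih =>
    set T := ∑ p ∈ Finset.range (m + 1), exp1 p u
    have hcross : exp1 (m + 1) u * starRingEnd ℂ T =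
        ∑ j ∈ Finset.range (m + 1), exp1 (j + 1) u := by
      rw [map_sum, Finset.mul_sum, ← Finset.sum_range_reflect]
      refine Finset.sum_congr rfl fun j hj => ?_
      rw [conj_exp1, exp1_mul_exp1]
      congr 1
      push_cast [Nat.cast_sub (Finset.mem_range_succ_iff.mp hj)]
      ring
    have hconj : exp1 (-(m + 1)) u * T = starRingEnd ℂ (exp1 (m + 1) u * starRingEnd ℂ T) := by
      rw [map_mul, Complex.conj_conj, conj_exp1, mul_comm]
    have hunit : exp1 (m + 1) u * exp1 (-(m + 1)) u = 1 := by
      rw [exp1_mul_exp1, add_neg_cancel, exp1_zero_left]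
    have hD : dirichletK (m + 1) u = 1 + exp1 (m + 1) u * starRingEnd ℂ T +
        starRingEnd ℂ (exp1 (m + 1) u * starRingEnd ℂ T) := by
      simp only [dirichletK_eq_one_add_sum, Finset.sum_add_distrib, hcross, map_sum, conj_exp1]
      ring
    have hstep : fejerK (m + 1) u = fejerK m u + dirichletK (m + 1) u := by
      simp only [fejerK, Finset.sum_apply, Finset.sum_range_succ _ (m + 1)]
    rw [hstep, ih, hD, Finset.sum_range_succ, map_add, conj_exp1]
    push_cast
    linear_combination (-1 : ℂ) * hunit - hconj

open scoped ComplexOrder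

lemma norm_sum_of_nonneg {ι : Type*} (s : Finset ι) {z : ι → ℂ} (hz : ∀ i ∈ s, 0 ≤ z i) :
    ‖∑ i ∈ s, z i‖ = ∑ i ∈ s, ‖z i‖ := by
  apply Complex.ofReal_injective
  push_cast
  rw [← Complex.eq_coe_norm_of_nonneg (Finset.sum_nonneg hz)]
  exact Finset.sum_congr rfl fun i hi => Complex.eq_coe_norm_of_nonneg (hz i hi)

lemma fejerK_nonneg (m : ℕ) (u : ℝ) : 0 ≤ fejerK m u := by
  rw [fejerK_eq_normSq]
  exact Complex.zero_le_real.mpr (Complex.normSq_nonneg _)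

lemma fejerK_mem_trigPoly1 (m : ℕ) : fejerK m ∈ trigPoly1 m :=
  Submodule.sum_mem _ fun _ hl => dirichletK_mem_trigPoly1 (Finset.mem_range_succ_iff.mp hl)

lemma integral_fejerK_sub (m : ℕ) (x : ℝ) :
    ∫ u in Set.Icc 0 (2 * π), fejerK m (x - u) = 2 * π * (m + 1) := by
  have hD : ∀ l, ∫ u in Set.Icc 0 (2 * π), dirichletK l (x - u) = 2 * π := fun l => by
    simpa [exp1_zero_left] using integral_exp1_mul_dirichletK_sub (k := 0) (Nat.cast_nonneg l) x
  simp only [fejerK, Finset.sum_apply]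
  rw [integral_finsetSum _ fun l _ =>
    (by fun_prop : Continuous fun u => dirichletK l (x - u)).integrableOn_Icc]
  simp [hD]
  ring

lemma vpK_eq_smul_sum (j : ℕ) : vpK j = (j : ℂ)⁻¹ • ∑ l ∈ Finset.Ico j (2 * j), dirichletK l := by
  ext v; simp [vpK, Finset.sum_apply]

lemma vpK_mem_trigPoly1 (j : ℕ) : vpK j ∈ trigPoly1 (2 * j) := by
  rw [vpK_eq_smul_sum]
  exact Submodule.smul_mem _ _ <| Submodule.sum_mem _ fun l hl =>
    dirichletK_mem_trigPoly1 (Finset.mem_Ico.mp hl).2.le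

lemma integral_exp1_mul_vpK_sub {j : ℕ} {k : ℤ} (hk : |k| < j) (x : ℝ) :
    ∫ u in Set.Icc 0 (2 * π), exp1 k u * vpK j (x - u) = 2 * π * exp1 k x := by
  have hj : (j : ℂ) ≠ 0 := by exact_mod_cast (abs_nonneg k).trans_lt hk |>.ne'
  simp only [vpK, Finset.mul_sum, mul_left_comm (exp1 k _)]
  rw [integral_finsetSum _ fun l _ => (by fun_prop :
    Continuous fun u => (j : ℂ)⁻¹ * (exp1 k u * dirichletK l (x - u))).integrableOn_Icc]
  simp only [integral_const_mul]
  rw [Finset.sum_congr rfl fun l hl => by rw [integral_exp1_mul_dirichletK_sub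
    (hk.le.trans (by exact_mod_cast (Finset.mem_Ico.mp hl).1))]]
  rw [Finset.sum_const, Nat.card_Ico, nsmul_eq_mul]
  field_simp
  push_cast [two_mul, Nat.add_sub_cancel]
  ring

lemma vpK_eq_sub_fejerK {j : ℕ} (hj : 0 < j) (v : ℝ) :
    vpK j v = (j : ℂ)⁻¹ * (fejerK (2 * j - 1) v - fejerK (j - 1) v) := by
  rw [vpK, fejerK, fejerK, Finset.sum_apply, Finset.sum_apply, Nat.sub_add_cancel (by omega),
    Nat.sub_add_cancel hj, Finset.sum_Ico_eq_sub _ (by omega)]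

def vpMajorant (j : ℕ) (x : ℝ) : ℝ → ℂ :=
  fun u => fejerK (2 * j - 1) (x - u) + fejerK (j - 1) (x - u)

lemma vpMajorant_nonneg (j : ℕ) (x u : ℝ) : 0 ≤ vpMajorant j x u :=
  add_nonneg (fejerK_nonneg _ _) (fejerK_nonneg _ _)

lemma vpMajorant_mem_trigPoly1 (j : ℕ) (x : ℝ) : vpMajorant j x ∈ trigPoly1 (2 * j) :=
  add_mem (trigPoly1_mono (by omega) (comp_sub_mem_trigPoly1 (fejerK_mem_trigPoly1 _) x))
    (trigPoly1_mono (by omega) (comp_sub_mem_trigPoly1 (fejerK_mem_trigPoly1 _) x))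

lemma integral_vpMajorant {j : ℕ} (hj : 0 < j) (x : ℝ) :
    ∫ u in Set.Icc 0 (2 * π), vpMajorant j x u = 2 * π * (3 * j) := by
  have hintegrable := fun m => (continuous_of_mem_trigPoly1
    (comp_sub_mem_trigPoly1 (fejerK_mem_trigPoly1 m) x)).integrableOn_Icc
      (μ := volume) (a := 0) (b := 2 * π)
  simp only [vpMajorant]
  rw [integral_add (hintegrable _) (hintegrable _), integral_fejerK_sub, integral_fejerK_sub,
    Nat.cast_sub (by omega), Nat.cast_sub hj]
  push_cast; ring

lemma norm_vpK_sub_le {j : ℕ} (hj : 0 < j) (x u : ℝ) :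
    ‖vpK j (x - u)‖ ≤ (j : ℝ)⁻¹ * ‖vpMajorant j x u‖ := by
  rw [vpK_eq_sub_fejerK hj, norm_mul, norm_inv, Complex.norm_natCast, vpMajorant]
  gcongr
  have hsum : ‖fejerK (2 * j - 1) (x - u) + fejerK (j - 1) (x - u)‖ =
      ‖fejerK (2 * j - 1) (x - u)‖ + ‖fejerK (j - 1) (x - u)‖ := by
    apply Complex.ofReal_injective
    push_cast
    rw [← Complex.eq_coe_norm_of_nonneg (add_nonneg (fejerK_nonneg _ _) (fejerK_nonneg _ _)),
      ← Complex.eq_coe_norm_of_nonneg (fejerK_nonneg _ _),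
      ← Complex.eq_coe_norm_of_nonneg (fejerK_nonneg _ _)]
  exact hsum ▸ norm_sub_le _ _

lemma fibb_pos (n : ℕ) : 0 < fibb n := by
  induction n using Nat.twoStepInduction with
  | zero => exact Nat.one_pos
  | one => exact Nat.one_pos
  | more n ih₁ ih₂ => rw [fibb]; omega

lemma fibPoint_mem_cube {n ν : ℕ} (hν : ν ≤ fibb n) : fibPoint n ν ∈ cube 2 := by
  have hb : (0 : ℝ) < fibb n := by exact_mod_cast fibb_pos n
  have hν' : (ν : ℝ) ≤ fibb n := by exact_mod_cast hν
  have h₀ := Int.fract_nonneg ((↑(ν * fibb (n - 1)) : ℝ) / fibb n)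
  have h₁ := Int.fract_lt_one ((↑(ν * fibb (n - 1)) : ℝ) / fibb n)
  push_cast at h₀ h₁
  refine ⟨fun i => ?_, fun i => ?_⟩ <;> fin_cases i <;> simp [fibPoint]
  · positivity
  · positivity
  · rw [div_le_iff₀ hb]; nlinarith [pi_pos]
  · nlinarith [pi_pos]

def FibCubatureExact (n N : ℕ) : Prop :=
  ∀ f ∈ trigSpace (hyperCross 2 N),
    (fibb n : ℂ)⁻¹ * ∑ ν ∈ Finset.Icc 1 (fibb n), f (fibPoint n ν) =
      (((2 * π) ^ 2 : ℝ) : ℂ)⁻¹ * ∫ x in cube 2, f x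

lemma not_fibCubatureExact_three : ¬ FibCubatureExact 3 3 := by
  intro hc
  have hmem : expFun ![3, 0] ∈ trigSpace (hyperCross 2 3) :=
    Submodule.subset_span ⟨![3, 0], by decide, rfl⟩
  have hnode : ∀ ν, expFun ![3, 0] (fibPoint 3 ν) = 1 := fun ν => by
    rw [expFun_eq_prod, Fin.prod_univ_two]
    simp only [fibPoint, Matrix.cons_val_zero, Matrix.cons_val_one, exp1_zero_left, mul_one]
    rw [exp1, show Complex.I * ((3 : ℤ) : ℂ) * ((2 * π * ν / ((fibb 3 : ℕ) : ℝ) : ℝ) : ℂ) =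
      (ν : ℤ) * (2 * π * Complex.I) by simp [fibb]; field_simp]
    exact Complex.exp_int_mul_two_pi_mul_I ν
  have hint : ∫ x in cube 2, expFun ![3, 0] x = 0 := by
    simp_rw [expFun_eq_prod]
    rw [integral_cube_prod (fun i => exp1 (![3, 0] i)), Fin.prod_univ_two]
    simp [integral_exp1]
  have := hc _ hmem
  simp [hnode, hint, fibb] at this

lemma FibCubatureExact.sum_prod {n : ℕ} {s : Fin 2 → ℕ}
    (hc : FibCubatureExact n (9 * 2 ^ ∑ j, s j)) {g : Fin 2 → ℝ → ℂ}
    (hg : ∀ i, g i ∈ trigPoly1 (3 * 2 ^ s i)) :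
    (fibb n : ℂ)⁻¹ * ∑ ν ∈ Finset.Icc 1 (fibb n), ∏ i, g i (fibPoint n ν i) =
      (((2 * π) ^ 2 : ℝ) : ℂ)⁻¹ * ∏ i, ∫ u in Set.Icc 0 (2 * π), g i u := by
  rw [← integral_cube_prod]
  refine hc _ (prod_mem_trigSpace_hyperCross hg ?_)
  have hmax : ∀ i, max (3 * 2 ^ s i) 1 = 3 * 2 ^ s i := fun i =>
    max_eq_left (by have := Nat.one_le_two_pow (n := s i); omega)
  rw [hmax, hmax, Fin.sum_univ_two, pow_add]
  exact le_of_eq (by ring)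

def fibVₗ (n : ℕ) (s : Fin 2 → ℕ) : ((Fin 2 → ℝ) → ℂ) →ₗ[ℂ] ((Fin 2 → ℝ) → ℂ) where
  toFun := fibV n s
  map_add' f g := by
    ext x; simp only [fibV, Pi.add_apply, add_mul, Finset.sum_add_distrib, mul_add]
  map_smul' a f := by
    ext x; simp only [fibV, Pi.smul_apply, smul_eq_mul, Finset.mul_sum, RingHom.id_apply]
    exact Finset.sum_congr rfl fun _ _ => by ring

lemma fibV_expFun {n : ℕ} {s : Fin 2 → ℕ}
    (hc : FibCubatureExact n (9 * 2 ^ ∑ j, s j)) {k : Fin 2 → ℤ} (hk : k ∈ Rbox s) :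
    fibV n s (expFun k) = expFun k := by
  have hk' : ∀ i, |k i| < ((2 ^ s i : ℕ) : ℤ) := fun i => by
    push_cast; exact abs_lt.mpr (Finset.mem_Ioo.mp (Fintype.mem_piFinset.mp hk i))
  ext x
  let g : Fin 2 → ℝ → ℂ := fun i => exp1 (k i) * fun u => vpK (2 ^ s i) (x i - u)
  have hg : ∀ i, g i ∈ trigPoly1 (3 * 2 ^ s i) := fun i => by
    have := exp1_mul_mem_trigPoly1 (comp_sub_mem_trigPoly1 (vpK_mem_trigPoly1 (2 ^ s i)) (x i))
      (hk' i).le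
    convert this using 2; ring
  have hnode : ∀ ν, expFun k (fibPoint n ν) * vpKd (fun i => 2 ^ s i) (x - fibPoint n ν) =
      ∏ i, g i (fibPoint n ν i) := fun ν => by
    simp only [expFun_eq_prod, vpKd, ← Finset.prod_mul_distrib, Pi.sub_apply, g, Pi.mul_apply]
  have hint : ∀ i, ∫ u in Set.Icc 0 (2 * π), g i u = 2 * π * exp1 (k i) (x i) := fun i =>
    integral_exp1_mul_vpK_sub (hk' i) (x i)
  simp only [fibV, hnode]
  rw [hc.sum_prod hg]
  simp only [hint, Finset.prod_mul_distrib, Finset.prod_const, expFun_eq_prod, Finset.card_univ,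
    Fintype.card_fin]
  field_simp
  push_cast
  ring

lemma fibV_eq_self {n : ℕ} {s : Fin 2 → ℕ}
    (hc : FibCubatureExact n (9 * 2 ^ ∑ j, s j)) {t : (Fin 2 → ℝ) → ℂ}
    (ht : t ∈ trigSpace (Rbox s)) :
    fibV n s t = t :=
  LinearMap.eqOn_span (f := fibVₗ n s) (g := LinearMap.id)
    (by rintro _ ⟨k, hk, rfl⟩; exact fibV_expFun hc hk) ht

lemma sum_norm_vpKd_le {n : ℕ} {s : Fin 2 → ℕ}
    (hc : FibCubatureExact n (9 * 2 ^ ∑ j, s j)) (x : Fin 2 → ℝ) :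
    (fibb n : ℝ)⁻¹ * ∑ ν ∈ Finset.Icc 1 (fibb n), ‖vpKd (fun i => 2 ^ s i) (x - fibPoint n ν)‖
      ≤ 9 := by
  set J : Fin 2 → ℕ := fun i => 2 ^ s i
  have hJ : ∀ i, 0 < J i := fun i => by positivity
  let G : Fin 2 → ℝ → ℂ := fun i => vpMajorant (J i) (x i)
  have hnode : ∀ ν, ‖vpKd J (x - fibPoint n ν)‖ ≤
      (∏ i, (J i : ℝ))⁻¹ * ‖∏ i, G i (fibPoint n ν i)‖ := fun ν => by
    rw [vpKd, norm_prod, norm_prod, ← Finset.prod_inv_distrib, ← Finset.prod_mul_distrib]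
    exact Finset.prod_le_prod (fun _ _ => norm_nonneg _) fun i _ => norm_vpK_sub_le (hJ i) _ _
  have hcub : (fibb n : ℝ)⁻¹ * ∑ ν ∈ Finset.Icc 1 (fibb n), ‖∏ i, G i (fibPoint n ν i)‖ =
      9 * ∏ i, (J i : ℝ) := by
    have hval : (((2 * π) ^ 2 : ℝ) : ℂ)⁻¹ * ∏ i, (2 * π * (3 * (J i : ℂ))) =
        ((9 * ∏ i, (J i : ℝ) : ℝ) : ℂ) := by
      simp only [Fin.prod_univ_two]; push_cast; field_simp; ring
    rw [← norm_sum_of_nonneg _ fun ν _ => Finset.prod_nonneg fun i _ => vpMajorant_nonneg _ _ _,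
      show (fibb n : ℝ)⁻¹ = ‖(fibb n : ℂ)⁻¹‖ by simp, ← norm_mul,
      hc.sum_prod fun i =>
        trigPoly1_mono (show 2 * J i ≤ 3 * J i by omega) (vpMajorant_mem_trigPoly1 _ _)]
    simp only [integral_vpMajorant (hJ _), hval, Complex.norm_real, Real.norm_eq_abs]
    exact abs_of_nonneg (by positivity)
  have hJprod : (∏ i, (J i : ℝ)) ≠ 0 :=
    Finset.prod_ne_zero_iff.mpr fun i _ => by exact_mod_cast (hJ i).ne'
  calc (fibb n : ℝ)⁻¹ * ∑ ν ∈ Finset.Icc 1 (fibb n), ‖vpKd J (x - fibPoint n ν)‖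
      ≤ (fibb n : ℝ)⁻¹ * ∑ ν ∈ Finset.Icc 1 (fibb n),
          (∏ i, (J i : ℝ))⁻¹ * ‖∏ i, G i (fibPoint n ν i)‖ := by
        gcongr with ν; exact hnode ν
    _ = (∏ i, (J i : ℝ))⁻¹ * (9 * ∏ i, (J i : ℝ)) := by
        rw [← hcub, ← Finset.mul_sum]; ring
    _ = 9 := by field_simp

lemma continuous_of_mem_trigSpace {d : ℕ} {Q : Finset (Fin d → ℤ)} {u : (Fin d → ℝ) → ℂ}
    (hu : u ∈ trigSpace Q) : Continuous u := by
  induction hu using Submodule.span_induction with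
  | mem _ hx => obtain ⟨k, -, rfl⟩ := hx; unfold expFun; fun_prop
  | zero => exact continuous_const
  | add _ _ _ _ h₁ h₂ => exact h₁.add h₂
  | smul a _ _ h => exact h.const_smul a

lemma unifNorm_nonneg {d : ℕ} (g : (Fin d → ℝ) → ℂ) : 0 ≤ unifNorm g :=
  Real.iSup_nonneg fun _ => norm_nonneg _

lemma norm_le_unifNorm {d : ℕ} {g : (Fin d → ℝ) → ℂ} (hg : Continuous g) {x : Fin d → ℝ}
    (hx : x ∈ cube d) : ‖g x‖ ≤ unifNorm g := by
  refine le_ciSup (f := fun y : cube d => ‖g y‖) ?_ ⟨x, hx⟩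
  exact (isCompact_Icc.image hg.norm).bddAbove.mono (by rintro _ ⟨y, rfl⟩; exact ⟨y, y.2, rfl⟩)

lemma unifNorm_le {d : ℕ} {g : (Fin d → ℝ) → ℂ} {C : ℝ} (h : ∀ x ∈ cube d, ‖g x‖ ≤ C) :
    unifNorm g ≤ C :=
  have : Nonempty (cube d) := ⟨⟨0, fun _ => le_rfl, fun _ => by positivity⟩⟩
  ciSup_le fun y => h y y.2

lemma norm_fibV_le {n : ℕ} {s : Fin 2 → ℕ}
    (hc : FibCubatureExact n (9 * 2 ^ ∑ j, s j)) {g : (Fin 2 → ℝ) → ℂ} {C : ℝ}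
    (hg : ∀ y ∈ cube 2, ‖g y‖ ≤ C) (x : Fin 2 → ℝ) : ‖fibV n s g x‖ ≤ 9 * C := by
  have hC : 0 ≤ C := (norm_nonneg _).trans (hg 0 ⟨fun _ => le_rfl, fun _ => by positivity⟩)
  have hnode : ∀ ν ∈ Finset.Icc 1 (fibb n),
      ‖g (fibPoint n ν) * vpKd (fun i => 2 ^ s i) (x - fibPoint n ν)‖ ≤
        C * ‖vpKd (fun i => 2 ^ s i) (x - fibPoint n ν)‖ := fun ν hν => by
    rw [norm_mul]
    exact mul_le_mul_of_nonneg_right (hg _ (fibPoint_mem_cube (Finset.mem_Icc.mp hν).2))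
      (norm_nonneg _)
  calc ‖fibV n s g x‖
      ≤ (fibb n : ℝ)⁻¹ * ∑ ν ∈ Finset.Icc 1 (fibb n),
          C * ‖vpKd (fun i => 2 ^ s i) (x - fibPoint n ν)‖ := by
        rw [fibV, norm_mul, norm_inv, Complex.norm_natCast]
        gcongr
        exact (norm_sum_le _ _).trans (Finset.sum_le_sum hnode)
    _ = C * ((fibb n : ℝ)⁻¹ * ∑ ν ∈ Finset.Icc 1 (fibb n),
          ‖vpKd (fun i => 2 ^ s i) (x - fibPoint n ν)‖) := by
        rw [← Finset.mul_sum]; ring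
    _ ≤ 9 * C := by nlinarith [sum_norm_vpKd_le hc x]

lemma unifNorm_sub_fibV_le {n : ℕ} {s : Fin 2 → ℕ}
    (hc : FibCubatureExact n (9 * 2 ^ ∑ j, s j)) {f t : (Fin 2 → ℝ) → ℂ} (hf : Continuous f)
    (ht : t ∈ trigSpace (Rbox s)) :
    unifNorm (f - fibV n s f) ≤ 10 * unifNorm (f - t) := by
  have hft : Continuous (f - t) := hf.sub (continuous_of_mem_trigSpace ht)
  have hsplit : f - fibV n s f = (f - t) + fibV n s (t - f) := by
    have := map_sub (fibVₗ n s) t f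
    simp only [fibVₗ, LinearMap.coe_mk, AddHom.coe_mk] at this
    rw [this, fibV_eq_self hc ht]; abel
  refine unifNorm_le fun x hx => ?_
  have hV : ‖fibV n s (t - f) x‖ ≤ 9 * unifNorm (f - t) :=
    norm_fibV_le hc (fun y hy => norm_sub_rev (t y) (f y) ▸ norm_le_unifNorm hft hy) x
  calc ‖(f - fibV n s f) x‖ ≤ ‖(f - t) x‖ + ‖fibV n s (t - f) x‖ := by
        rw [hsplit]; exact norm_add_le _ _
    _ ≤ unifNorm (f - t) + 9 * unifNorm (f - t) := add_le_add (norm_le_unifNorm hft hx) hV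
    _ = 10 * unifNorm (f - t) := by ring

lemma unifNorm_sub_fibV_le_distT {n : ℕ} {s : Fin 2 → ℕ}
    (hc : FibCubatureExact n (9 * 2 ^ ∑ j, s j)) {f : (Fin 2 → ℝ) → ℂ} (hf : Continuous f) :
    unifNorm (f - fibV n s f) ≤ 10 * distT f (Rbox s) := by
  rw [distT, Real.mul_iInf_of_nonneg (by norm_num)]
  exact le_ciInf fun u => unifNorm_sub_fibV_le hc hf u.2

theorem stmt11_general (γ : ℝ)
    (hcub : ∀ n : ℕ, 2 < n → ∀ N : ℕ, (N : ℝ) ≤ γ * fibb n →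
      ∀ f ∈ trigSpace (hyperCross 2 N),
        (fibb n : ℂ)⁻¹ * ∑ ν ∈ Finset.Icc 1 (fibb n), f (fibPoint n ν) =
          (((2 * Real.pi) ^ 2 : ℝ) : ℂ)⁻¹ * ∫ x in cube 2, f x)
    (n n' : ℕ)
    (hn' : IsGreatest {k : ℕ | (2 : ℝ) ^ k ≤ γ * fibb n / 9} n')
    (f : (Fin 2 → ℝ) → ℂ) (hf : Continuous f) :
    (⨅ s : {s : Fin 2 → ℕ // (∑ j, s j) = n'}, unifNorm (f - fibV n s f)) ≤
      10 * ⨅ s : {s : Fin 2 → ℕ // (∑ j, s j) = n'}, distT f (Rbox (s : Fin 2 → ℕ)) := by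
  have hN : ((9 * 2 ^ n' : ℕ) : ℝ) ≤ γ * fibb n := by
    have := hn'.1; push_cast; simp only [Set.mem_ofPred_eq] at this; linarith
  have hn : 2 < n := by
    by_contra! hn
    have hb : (fibb n : ℝ) ≤ 2 := by
      exact_mod_cast (show fibb n ≤ 2 by interval_cases n <;> decide)
    have h2 : (1 : ℝ) ≤ 2 ^ n' := one_le_pow₀ one_le_two
    refine not_fibCubatureExact_three (hcub 3 (by norm_num) 3 ?_)
    push_cast at hN ⊢
    rw [show (fibb 3 : ℝ) = 3 by norm_num [fibb]]
    nlinarith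
  have hc : FibCubatureExact n (9 * 2 ^ n') := hcub n hn _ hN
  have : Nonempty {s : Fin 2 → ℕ // (∑ j, s j) = n'} := ⟨⟨![n', 0], by simp⟩⟩
  rw [Real.mul_iInf_of_nonneg (by norm_num)]
  refine ciInf_mono ⟨0, Set.forall_mem_range.mpr fun _ => unifNorm_nonneg _⟩ fun s => ?_
  exact unifNorm_sub_fibV_le_distT (by rw [s.2]; exact hc) hf

/-- Lebesgue-type inequality for the universal Fibonacci recovery
algorithm `V^n` (Proposition FP1). -/
theorem stmt11 (γ : ℝ) (hγ : 0 < γ)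
    (hcub : ∀ n : ℕ, 2 < n → ∀ N : ℕ, (N : ℝ) ≤ γ * fibb n →
      ∀ f ∈ trigSpace (hyperCross 2 N),
        (fibb n : ℂ)⁻¹ * ∑ ν ∈ Finset.Icc 1 (fibb n), f (fibPoint n ν) =
          (((2 * Real.pi) ^ 2 : ℝ) : ℂ)⁻¹ * ∫ x in cube 2, f x)
    (n n' : ℕ)
    (hn' : IsGreatest {k : ℕ | (2 : ℝ) ^ k ≤ γ * fibb n / 9} n')
    (f : (Fin 2 → ℝ) → ℂ) (hf : Continuous f) (hper : Periodic2Pi f) :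
    (⨅ s : {s : Fin 2 → ℕ // (∑ j, s j) = n'}, unifNorm (f - fibV n s f)) ≤
      10 * ⨅ s : {s : Fin 2 → ℕ // (∑ j, s j) = n'}, distT f (Rbox (s : Fin 2 → ℕ)) :=
  stmt11_general γ hcub n n' hn' f hf
end
end

section
/- Let m be a prime number and N a natural number such that |Γ(N,d)| < (m−1)/d. Then there is a natural number h with 1 ≤ h < m such that for every f ∈ 𝒯(Γ(N,d)) the Korobov cubature formula with node vector (1, h, h², …, h^{d−1}) is exact: m^{−1} Σ_{ν=1}^m f(2π{ν/m}, 2π{νh/m}, …, 2π{νh^{d−1}/m}) = (2π)^{−d} ∫_{𝕋^d} f(x) dx. -/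
noncomputable section
open scoped BigOperators
open MeasureTheory

/-- The Korobov points `w^ν = (2π{νh_1/m}, …, 2π{νh_d/m})`. -/
def korNode (m : ℕ) {d : ℕ} (h : Fin d → ℤ) (ν : ℕ) : Fin d → ℝ :=
  fun i => 2 * Real.pi * Int.fract ((ν : ℝ) * (h i : ℝ) / (m : ℝ))

/-!
If `k · (1, h, …, h^{d-1}) ≢ 0 (mod m)` for every nonzero `k ∈ Γ(N,d)`, the Korobov nodes see
`e^{i(k,x)}` as the powers `ζ^{ν (k · h)}` of a nontrivial `m`-th root of unity, which sum to zero,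
matching `∫ e^{i(k,x)} = 0`; linearity then gives exactness on `𝒯(Γ(N,d))`. Such an `h` exists:
since `|k_j| ≤ N < m`, each nonzero `k` reduces to a nonzero polynomial `∑ k_j X^j` of degree `< d`
over `𝔽_m`, with at most `d - 1` roots, so at most `|Γ(N,d)| (d - 1) < m - 1` nonzero residues fail.
-/
open Finset

theorem integral_Icc_exp_I_mul_int_mul (k : ℤ) :
    ∫ t in Set.Icc (0 : ℝ) (2 * Real.pi), Complex.exp (Complex.I * k * t) =
      if k = 0 then ((2 * Real.pi : ℝ) : ℂ) else 0 := by
  split_ifs with hk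
  · simp [hk, Real.pi_pos.le]
  · have hc : Complex.I * k ≠ 0 := by simp [hk]
    have hperiod : Complex.I * k * ((2 * Real.pi : ℝ) : ℂ) = k * (2 * Real.pi * Complex.I) := by
      push_cast; ring
    rw [integral_Icc_eq_integral_Ioc, ← intervalIntegral.integral_of_le (by positivity),
      integral_exp_mul_complex hc, hperiod, Complex.exp_int_mul_two_pi_mul_I]
    simp

theorem setIntegral_cube_prod {d : ℕ} (g : Fin d → ℝ → ℂ) :
    ∫ x in cube d, ∏ j, g j (x j) = ∏ j, ∫ t in Set.Icc (0 : ℝ) (2 * Real.pi), g j t := by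
  rw [cube, ← Set.pi_univ_Icc, volume_pi, Measure.restrict_pi_pi]
  exact integral_fintype_prod_eq_prod g

theorem expFun_eq_prod_s13 {d : ℕ} (k : Fin d → ℤ) (x : Fin d → ℝ) :
    expFun k x = ∏ j, Complex.exp (Complex.I * k j * x j) := by
  simp only [expFun, mul_sum, Complex.exp_sum, mul_assoc]

theorem integral_expFun {d : ℕ} (k : Fin d → ℤ) :
    ∫ x in cube d, expFun k x = if k = 0 then (((2 * Real.pi) ^ d : ℝ) : ℂ) else 0 := by
  simp_rw [expFun_eq_prod_s13]
  rw [setIntegral_cube_prod fun j t => Complex.exp (Complex.I * k j * t)]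
  simp_rw [integral_Icc_exp_I_mul_int_mul]
  split_ifs with hk
  · simp [hk]
  · obtain ⟨j, hj⟩ := Function.ne_iff.mp hk
    exact prod_eq_zero (mem_univ j) (if_neg hj)

theorem continuous_expFun {d : ℕ} (k : Fin d → ℤ) : Continuous (expFun k) := by
  unfold expFun
  fun_prop

theorem cubature_exact_of_forall_expFun {d : ℕ} {ι : Type*} {Q : Finset (Fin d → ℤ)}
    (s : Finset ι) (x : ι → Fin d → ℝ) (c : ℂ)
    (hQ : ∀ k ∈ Q, c * ∑ ν ∈ s, expFun k (x ν) =
      (((2 * Real.pi) ^ d : ℝ) : ℂ)⁻¹ * ∫ y in cube d, expFun k y)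
    {f : (Fin d → ℝ) → ℂ} (hf : f ∈ trigSpace Q) :
    c * ∑ ν ∈ s, f (x ν) = (((2 * Real.pi) ^ d : ℝ) : ℂ)⁻¹ * ∫ y in cube d, f y := by
  suffices IntegrableOn f (cube d) ∧
      c * ∑ ν ∈ s, f (x ν) = (((2 * Real.pi) ^ d : ℝ) : ℂ)⁻¹ * ∫ y in cube d, f y from this.2
  induction hf using Submodule.span_induction with
  | mem g hg =>
    obtain ⟨k, hk, rfl⟩ := hg
    exact ⟨(continuous_expFun k).continuousOn.integrableOn_compact isCompact_Icc, hQ k hk⟩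
  | zero => exact ⟨integrableOn_zero, by simp⟩
  | add f g _ _ hf hg =>
    refine ⟨hf.1.add hg.1, ?_⟩
    simp only [Pi.add_apply, sum_add_distrib, integral_add hf.1 hg.1, mul_add, hf.2, hg.2]
  | smul a f _ hf =>
    refine ⟨hf.1.smul a, ?_⟩
    simp only [Pi.smul_apply, smul_eq_mul, ← mul_sum, integral_const_mul]
    linear_combination a * hf.2

theorem sum_Icc_zpow_mul_eq_zero {K : Type*} [Field K] {m : ℕ} {ζ : K} (hζ : IsPrimitiveRoot ζ m)
    {S : ℤ} (hS : ¬ (m : ℤ) ∣ S) : ∑ ν ∈ Icc 1 m, ζ ^ (S * ν) = 0 := by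
  have hω : ζ ^ S ≠ 1 := fun h => hS ((hζ.zpow_eq_one_iff_dvd S).mp h)
  have hωm : (ζ ^ S) ^ m = 1 := by
    rw [← zpow_natCast, ← zpow_mul, mul_comm, zpow_mul, zpow_natCast, hζ.pow_eq_one, one_zpow]
  simp only [zpow_mul, zpow_natCast]
  rw [← Ico_add_one_right_eq_Icc, geom_sum_Ico hω (by omega), pow_succ, hωm]
  simp

theorem expFun_korNode {d : ℕ} (m : ℕ) (h k : Fin d → ℤ) (ν : ℕ) :
    expFun k (korNode m h ν) =
      Complex.exp (2 * Real.pi * Complex.I / m) ^ ((∑ j, k j * h j) * ν) := by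
  have hphase : Complex.I * ∑ j, (k j : ℂ) * ((korNode m h ν j : ℝ) : ℂ) =
      ((∑ j, k j * h j) * ν : ℤ) * (2 * Real.pi * Complex.I / m) +
        (∑ j, k j * -⌊(ν : ℝ) * h j / m⌋ : ℤ) * (2 * Real.pi * Complex.I) := by
    simp only [korNode, Int.fract]
    push_cast
    simp only [mul_sum, sum_mul, ← sum_add_distrib]
    refine sum_congr rfl fun j _ => ?_
    ring
  rw [expFun, hphase, Complex.exp_add, Complex.exp_int_mul_two_pi_mul_I, mul_one,
    Complex.exp_int_mul]

theorem card_filter_sum_mul_pow_eq_zero_lt {R : Type*} [CommRing R] [IsDomain R] [Fintype R]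
    [DecidableEq R] {d : ℕ} {c : Fin d → R} (hc : c ≠ 0) :
    #{a | ∑ j, c j * a ^ (j : ℕ) = 0} < d := by
  set p := Polynomial.ofFn d c
  have hp : p ≠ 0 := by
    rw [← map_zero (Polynomial.ofFn (R := R) d)]
    exact (Polynomial.injective_ofFn d).ne hc
  have hd : 1 ≤ d := Nat.one_le_iff_ne_zero.mpr (Polynomial.ne_zero_of_ofFn_ne_zero hp)
  have heval : ∀ a, p.eval a = ∑ j, c j * a ^ (j : ℕ) := fun a => by
    simp [p, Polynomial.ofFn_eq_sum_monomial, Polynomial.eval_finsetSum]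
  refine lt_of_le_of_lt (Polynomial.card_le_degree_of_subset_roots fun a ha => ?_)
    (Polynomial.ofFn_natDegree_lt hd c)
  rw [Polynomial.mem_roots hp, Polynomial.IsRoot, heval]
  simpa using ha

theorem exists_ne_zero_forall_sum_mul_pow_ne_zero {R : Type*} [CommRing R] [IsDomain R] [Fintype R]
    [DecidableEq R] {d : ℕ} (K : Finset (Fin d → R)) (hK : ∀ c ∈ K, c ≠ 0)
    (hcard : #K * (d - 1) + 1 < Fintype.card R) :
    ∃ a ≠ 0, ∀ c ∈ K, ∑ j, c j * a ^ (j : ℕ) ≠ 0 := by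
  set bad := insert 0 (K.biUnion fun c => {a | ∑ j, c j * a ^ (j : ℕ) = 0})
  have hbad : #bad < #(univ : Finset R) := calc
    #bad ≤ #K * (d - 1) + 1 := (card_insert_le _ _).trans <| Nat.add_le_add_right
      (card_biUnion_le_card_mul _ _ _ fun c hc =>
        Nat.le_sub_one_of_lt (card_filter_sum_mul_pow_eq_zero_lt (hK c hc))) 1
    _ < #(univ : Finset R) := hcard
  obtain ⟨a, -, ha⟩ := exists_mem_notMem_of_card_lt_card hbad
  refine ⟨a, fun h => ha (h ▸ mem_insert_self _ _), fun c hc h0 => ha ?_⟩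
  exact mem_insert_of_mem (mem_biUnion.mpr ⟨c, hc, by simpa using h0⟩)

theorem mem_hyperCross {d N : ℕ} {k : Fin d → ℤ} :
    k ∈ hyperCross d N ↔ (∀ j, |k j| ≤ N) ∧ ∏ j, max |k j| 1 ≤ N := by
  simp [hyperCross, abs_le]

theorem le_card_hyperCross {d N : ℕ} (j : Fin d) : N ≤ #(hyperCross d N) := by
  have hsub : (Icc 1 N).image (fun t : ℕ => Pi.single j (t : ℤ)) ⊆ hyperCross d N := by
    intro k hk
    obtain ⟨t, ht, rfl⟩ := mem_image.mp hk
    rw [mem_Icc] at ht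
    rw [mem_hyperCross, prod_eq_single j (fun i _ hi => by simp [hi]) (by simp)]
    refine ⟨fun i => ?_, by simp; omega⟩
    rcases eq_or_ne i j with rfl | hi <;> simp [*]
  have hinj : Function.Injective fun t : ℕ => (Pi.single j (t : ℤ) : Fin d → ℤ) :=
    (Pi.single_injective j).comp Nat.cast_injective
  simpa [card_image_of_injective _ hinj] using card_le_card hsub

theorem exists_korobov_multiplier {d m N : ℕ} (hm : m.Prime) (hN : #(hyperCross d N) * d + 1 < m) :
    ∃ h : ℕ, 1 ≤ h ∧ h < m ∧
      ∀ k ∈ hyperCross d N, k ≠ 0 → ¬ (m : ℤ) ∣ ∑ j, k j * (h : ℤ) ^ (j : ℕ) := by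
  have := Fact.mk hm
  set K := ((hyperCross d N).erase 0).image fun k j => (k j : ZMod m)
  have hK : ∀ c ∈ K, c ≠ 0 := by
    simp only [K, mem_image, mem_erase]
    rintro _ ⟨k, ⟨hk0, hk⟩, rfl⟩ hc
    obtain ⟨j, hj⟩ := Function.ne_iff.mp hk0
    have hlt : |k j| < m := by
      have hNm : N < m := by
        have := le_card_hyperCross (N := N) j
        nlinarith [j.pos]
      have := (mem_hyperCross.mp hk).1 j
      omega
    exact hj (Int.eq_zero_of_abs_lt_dvd ((ZMod.intCast_zmod_eq_zero_iff_dvd _ _).mp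
      (congrFun hc j)) hlt)
  have hcard : #K * (d - 1) + 1 < Fintype.card (ZMod m) := by
    have : #K ≤ #(hyperCross d N) := card_image_le.trans card_erase_le
    rw [ZMod.card]
    nlinarith [Nat.sub_le d 1]
  obtain ⟨a, ha0, ha⟩ := exists_ne_zero_forall_sum_mul_pow_ne_zero K hK hcard
  refine ⟨a.val, ZMod.val_pos.mpr ha0, ZMod.val_lt a, fun k hk hk0 hdvd => ?_⟩
  refine ha _ (mem_image_of_mem _ (mem_erase.mpr ⟨hk0, hk⟩)) ?_
  simpa using (ZMod.intCast_zmod_eq_zero_iff_dvd _ _).mpr hdvd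

theorem stmt13_general (d m N : ℕ) (hm : m.Prime)
    (hN : ((hyperCross d N).card : ℝ) < ((m : ℝ) - 1) / d) :
    ∃ h : ℕ, 1 ≤ h ∧ h < m ∧
      ∀ f ∈ trigSpace (hyperCross d N),
        (m : ℂ)⁻¹ * ∑ ν ∈ Finset.Icc 1 m,
            f (korNode m (fun i => (h : ℤ) ^ (i : ℕ)) ν) =
          (((2 * Real.pi) ^ d : ℝ) : ℂ)⁻¹ * ∫ x in cube d, f x := by
  have hN' : #(hyperCross d N) * d + 1 < m := by
    rcases Nat.eq_zero_or_pos d with rfl | hd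
    · -- `(m - 1) / 0 = 0`, so `hN` reads `|Γ(N,0)| < 0`
      simp only [CharP.cast_eq_zero, div_zero] at hN
      exact (hN.not_ge (Nat.cast_nonneg _)).elim
    · have := (lt_div_iff₀ (by exact_mod_cast hd : (0 : ℝ) < d)).mp hN
      exact_mod_cast (by push_cast; linarith : ((#(hyperCross d N) * d + 1 : ℕ) : ℝ) < m)
  obtain ⟨h, h1, hlt, hgood⟩ := exists_korobov_multiplier hm hN'
  refine ⟨h, h1, hlt, fun f hf => cubature_exact_of_forall_expFun _ _ _ (fun k hk => ?_) hf⟩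
  rw [integral_expFun]
  split_ifs with hk0
  · have hm0 : (m : ℂ) ≠ 0 := by exact_mod_cast hm.ne_zero
    simp [hk0, expFun, hm0, Real.pi_ne_zero]
  · simp_rw [expFun_korNode]
    rw [sum_Icc_zpow_mul_eq_zero (Complex.isPrimitiveRoot_exp m hm.ne_zero) (hgood k hk hk0)]
    simp

/-- existence of an exact Korobov cubature formula with node vector
`(1, h, h², …, h^{d-1})` on `𝒯(Γ(N,d))` when `|Γ(N,d)| < (m-1)/d` (Lemma CL1). -/
theorem stmt13 (d m N : ℕ) (hd : 0 < d) (hm : m.Prime)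
    (hN : ((hyperCross d N).card : ℝ) < ((m : ℝ) - 1) / d) :
    ∃ h : ℕ, 1 ≤ h ∧ h < m ∧
      ∀ f ∈ trigSpace (hyperCross d N),
        (m : ℂ)⁻¹ * ∑ ν ∈ Finset.Icc 1 m,
            f (korNode m (fun i => (h : ℤ) ^ (i : ℕ)) ν) =
          (((2 * Real.pi) ^ d : ℝ) : ℂ)⁻¹ * ∫ x in cube d, f x :=
  stmt13_general d m N hm hN
end
end
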